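/- arXiv:2004.05231 — 2 statements merged into one kernel-verified Lean document; each statement's English description precedes it below -/
import Mathlib

section
/- For every multi-index β, the Fock-Sobolev norm of e_β equals the Gauss-Sobolev norm of h_β: Σ_{|α|≤m} ‖∂^α e_β‖_{F²} = Σ_{|α|≤m} ‖∂^α h_β‖_{L²(γ)}. -/
open MeasureTheory Finset

noncomputable section

def pdR (n : ℕ) (j : Fin n) (f : (Fin n → ℝ) → ℝ) : (Fin n → ℝ) → ℝ :=
  fun x => fderiv ℝ f x (Pi.single j 1)

def pdRMulti (n : ℕ) (α : Fin n → ℕ) (f : (Fin n → ℝ) → ℝ) : (Fin n → ℝ) → ℝ :=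
  ((List.finRange n).map (fun j => (pdR n j)^[α j])).foldr (· ∘ ·) id f

def pdRC (n : ℕ) (j : Fin n) (f : (Fin n → ℝ) → ℂ) : (Fin n → ℝ) → ℂ :=
  fun x => fderiv ℝ f x (Pi.single j 1)

def pdRCMulti (n : ℕ) (α : Fin n → ℕ) (f : (Fin n → ℝ) → ℂ) : (Fin n → ℝ) → ℂ :=
  ((List.finRange n).map (fun j => (pdRC n j)^[α j])).foldr (· ∘ ·) id f

def pdC (n : ℕ) (j : Fin n) (f : (Fin n → ℂ) → ℂ) : (Fin n → ℂ) → ℂ :=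
  fun x => fderiv ℂ f x (Pi.single j 1)

def pdCMulti (n : ℕ) (α : Fin n → ℕ) (f : (Fin n → ℂ) → ℂ) : (Fin n → ℂ) → ℂ :=
  ((List.finRange n).map (fun j => (pdC n j)^[α j])).foldr (· ∘ ·) id f

def gaussR (n : ℕ) : Measure (Fin n → ℝ) :=
  volume.withDensity fun x =>
    ENNReal.ofReal ((2 * Real.pi) ^ (-(n : ℝ) / 2) * Real.exp (-(∑ j, (x j) ^ 2) / 2))

def gaussC (n : ℕ) : Measure (Fin n → ℂ) :=
  volume.withDensity fun z =>
    ENNReal.ofReal (Real.pi ^ (-(n : ℝ)) * Real.exp (-(∑ j, ‖z j‖ ^ 2)))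

def L2n {X : Type*} [MeasurableSpace X] {E : Type*} [NormedAddCommGroup E]
    (μ : Measure X) (f : X → E) : ℝ :=
  Real.sqrt (∫ x, ‖f x‖ ^ 2 ∂μ)

def MIdx (n m : ℕ) : Finset (Fin n → ℕ) :=
  (Fintype.piFinset fun _ => Finset.range (m + 1)).filter fun α => ∑ j, α j ≤ m

def GSnormR (n m : ℕ) (f : (Fin n → ℝ) → ℝ) : ℝ :=
  ∑ α ∈ MIdx n m, L2n (gaussR n) (pdRMulti n α f)

def GSnormC (n m : ℕ) (f : (Fin n → ℝ) → ℂ) : ℝ :=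
  ∑ α ∈ MIdx n m, L2n (gaussR n) (pdRCMulti n α f)

def FSnorm (n m : ℕ) (f : (Fin n → ℂ) → ℂ) : ℝ :=
  ∑ α ∈ MIdx n m, L2n (gaussC n) (pdCMulti n α f)

def MemFS (n m : ℕ) (f : (Fin n → ℂ) → ℂ) : Prop :=
  Differentiable ℂ f ∧ ∀ α ∈ MIdx n m, Integrable (fun z => ‖pdCMulti n α f z‖ ^ 2) (gaussC n)

def H1 (k : ℕ) (t : ℝ) : ℝ :=
  (-1) ^ k * Real.exp (t ^ 2) * (deriv^[k] fun s => Real.exp (-(s ^ 2))) t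

def hermiteF (n : ℕ) (β : Fin n → ℕ) (x : Fin n → ℝ) : ℝ :=
  (Real.sqrt ((2 : ℝ) ^ (∑ j, β j) * ∏ j, (Nat.factorial (β j) : ℝ)))⁻¹ *
    ∏ j, H1 (β j) (x j / Real.sqrt 2)

def eB (n : ℕ) (β : Fin n → ℕ) (z : Fin n → ℂ) : ℂ :=
  (∏ j, z j ^ β j) / ((Real.sqrt (∏ j, (Nat.factorial (β j) : ℝ)) : ℝ) : ℂ)

def dotRC (n : ℕ) (x : Fin n → ℝ) (z : Fin n → ℂ) : ℂ := ∑ j, (x j : ℂ) * z j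

def zsq (n : ℕ) (z : Fin n → ℂ) : ℂ := ∑ j, z j ^ 2

def eucl (n : ℕ) (z : Fin n → ℂ) : ℝ := Real.sqrt (∑ j, ‖z j‖ ^ 2)

def GT (n : ℕ) (g : (Fin n → ℝ) → ℂ) (z : Fin n → ℂ) : ℂ :=
  ∫ x, g x * Complex.exp (dotRC n x z - zsq n z / 2) ∂gaussR n

def GinvT (n : ℕ) (f : (Fin n → ℂ) → ℂ) (x : Fin n → ℝ) : ℂ :=
  ∫ z, f z * Complex.exp (dotRC n x (fun j => starRingEnd ℂ (z j)) -
    zsq n (fun j => starRingEnd ℂ (z j)) / 2) ∂gaussC n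

def Weyl (n : ℕ) (b : Fin n → ℝ) (h : (Fin n → ℂ) → ℂ) (z : Fin n → ℂ) : ℂ :=
  h (fun j => z j - (b j : ℂ)) * Complex.exp (dotRC n b z - ((∑ j, (b j) ^ 2 : ℝ) : ℂ) / 2)

def Cunit (n : ℕ) (c : ℂ) (f : (Fin n → ℂ) → ℂ) (z : Fin n → ℂ) : ℂ := f fun j => c * z j

def Sop (n : ℕ) (φ f : (Fin n → ℂ) → ℂ) (z : Fin n → ℂ) : ℂ :=
  ∫ w, f w * Complex.exp (∑ j, z j * starRingEnd ℂ (w j)) *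
    φ (fun j => z j - starRingEnd ℂ (w j)) ∂gaussC n

def Barg (n : ℕ) (f : (Fin n → ℝ) → ℂ) (z : Fin n → ℂ) : ℂ :=
  (((2 / Real.pi) ^ ((n : ℝ) / 4) : ℝ) : ℂ) *
    ∫ x, f x * Complex.exp (2 * dotRC n x z - ((∑ j, (x j) ^ 2 : ℝ) : ℂ) - zsq n z / 2)

def IsGSMul (n m : ℕ) (u : (Fin n → ℝ) → ℂ) : Prop :=
  ∃ C, 0 ≤ C ∧ ∀ g : (Fin n → ℝ) → ℂ, ContDiff ℝ (⊤ : ℕ∞) g →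
    GSnormC n m (fun x => u x * g x) ≤ C * GSnormC n m g

end

open Polynomial Real

noncomputable section AuxFock

lemma hermite_deriv (k : ℕ) :
    derivative (hermite (k+1)) = C ((k:ℤ)+1) * hermite k := by
  induction k with
  | zero => simp [hermite_one, hermite_zero]
  | succ k ih =>
    rw [hermite_succ (k+1), derivative_sub, derivative_mul, derivative_X, ih,
      derivative_C_mul, hermite_succ k]
    simp only [Nat.cast_add, Nat.cast_one, C_add, C_1]
    ring

/-- real Hermite polynomial (probabilists'). -/
def HeR (k : ℕ) (x : ℝ) : ℝ := Polynomial.aeval x (Polynomial.hermite k)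

lemma HeR_zero (x : ℝ) : HeR 0 x = 1 := by simp [HeR, hermite_zero]

lemma HeR_deriv_eval (k : ℕ) (x : ℝ) :
    Polynomial.aeval x (derivative (hermite k)) = (k:ℝ) * HeR (k-1) x := by
  cases k with
  | zero => simp [hermite_zero]
  | succ j =>
    rw [hermite_deriv j]
    simp only [map_mul, aeval_C]
    push_cast
    simp [HeR]

lemma hasDerivAt_HeR (k : ℕ) (x : ℝ) :
    HasDerivAt (HeR k) ((k : ℝ) * HeR (k-1) x) x := by
  have h := Polynomial.hasDerivAt_aeval (𝕜 := ℝ) (q := hermite k) x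
  rw [HeR_deriv_eval] at h
  exact h

lemma HeR_succ (k : ℕ) (x : ℝ) :
    HeR (k+1) x = x * HeR k x - (k:ℝ) * HeR (k-1) x := by
  rw [HeR, hermite_succ, map_sub, map_mul, aeval_X, HeR_deriv_eval]
  rfl

def HeP (k : ℕ) : ℝ[X] := (hermite k).map (Int.castRingHom ℝ)

lemma HeR_eq_eval (k : ℕ) (x : ℝ) : HeR k x = (HeP k).eval x := by
  rw [HeR, HeP, aeval_def, eval_map, algebraMap_int_eq]

lemma hasDerivAt_gauss1 (x : ℝ) :
    HasDerivAt (fun y : ℝ => Real.exp (-(y^2)/2)) (-x * Real.exp (-(x^2)/2)) x := by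
  have h : HasDerivAt (fun y : ℝ => -(y^2)/2) (-x) x := by
    have := ((hasDerivAt_pow 2 x).neg).div_const 2
    simpa using this.congr_deriv (by push_cast; ring)
  simpa [mul_comm] using h.exp

lemma pg_integrable (p : ℝ[X]) :
    Integrable (fun x : ℝ => p.eval x * Real.exp (-(x^2)/2)) := by
  have key : ∀ i : ℕ, Integrable (fun x : ℝ => x ^ i * Real.exp (-(x^2)/2)) := by
    intro i
    have h := integrable_rpow_mul_exp_neg_mul_sq (b := (1:ℝ)/2) (by norm_num) (s := i)
      (lt_of_lt_of_le neg_one_lt_zero (Nat.cast_nonneg i))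
    have e : (fun x : ℝ => x ^ (i:ℝ) * Real.exp (-(1/2) * x^2)) =
        fun x : ℝ => x ^ i * Real.exp (-(x^2)/2) := by
      funext x
      rw [Real.rpow_natCast]
      ring_nf
    rwa [e] at h
  have e : (fun x : ℝ => p.eval x * Real.exp (-(x^2)/2)) =
      fun x : ℝ => ∑ i ∈ Finset.range (p.natDegree + 1),
        p.coeff i * (x ^ i * Real.exp (-(x^2)/2)) := by
    funext x
    rw [Polynomial.eval_eq_sum_range, Finset.sum_mul]
    exact Finset.sum_congr rfl fun i _ => by ring
  rw [e]
  exact integrable_finset_sum _ fun i _ => (key i).const_mul _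

lemma HeR_L2 (k : ℕ) :
    ∫ x : ℝ, (HeR k x)^2 * Real.exp (-(x^2)/2) = (k.factorial : ℝ) * Real.sqrt (2 * π) := by
  induction k with
  | zero =>
    have h := integral_gaussian ((1:ℝ)/2)
    have e1 : (fun x : ℝ => Real.exp (-(1/2) * x^2)) = fun x : ℝ => Real.exp (-(x^2)/2) := by
      funext x; ring_nf
    rw [e1] at h
    have e2 : π / (1/2 : ℝ) = 2 * π := by ring
    simp only [HeR_zero, one_pow, one_mul, h, e2, Nat.factorial_zero, Nat.cast_one]
  | succ k ih =>
    set u : ℝ → ℝ := HeR (k+1) with hu_def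
    set γ : ℝ → ℝ := fun x => Real.exp (-(x^2)/2) with hγ_def
    have hu : ∀ x, HasDerivAt u (((k+1:ℕ):ℝ) * HeR k x) x := fun x => by
      simpa using hasDerivAt_HeR (k+1) x
    have hv : ∀ x, HasDerivAt (fun x => HeR k x * γ x) (-(u x * γ x)) x := by
      intro x
      have h := (hasDerivAt_HeR k x).mul (hasDerivAt_gauss1 x)
      refine h.congr_deriv ?_
      rw [hu_def, HeR_succ k x]
      ring
    have huv' : Integrable (u * fun x => -(u x * γ x)) := by
      have : (u * fun x => -(u x * γ x)) = fun x => (-(HeP (k+1) * HeP (k+1))).eval x * γ x := by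
        funext x
        simp only [Pi.mul_apply, eval_neg, eval_mul, hu_def, HeR_eq_eval]
        ring
      rw [this]; exact pg_integrable _
    have hu'v : Integrable ((fun x => ((k+1:ℕ):ℝ) * HeR k x) * fun x => HeR k x * γ x) := by
      have : ((fun x => ((k+1:ℕ):ℝ) * HeR k x) * fun x => HeR k x * γ x) =
          fun x => (C ((k+1:ℕ):ℝ) * HeP k * HeP k).eval x * γ x := by
        funext x
        simp only [Pi.mul_apply, eval_mul, eval_C, HeR_eq_eval]
        ring
      rw [this]; exact pg_integrable _
    have huv : Integrable (u * fun x => HeR k x * γ x) := by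
      have : (u * fun x => HeR k x * γ x) = fun x => (HeP (k+1) * HeP k).eval x * γ x := by
        funext x
        simp only [Pi.mul_apply, eval_mul, hu_def, HeR_eq_eval]
        ring
      rw [this]; exact pg_integrable _
    have key := integral_mul_deriv_eq_deriv_mul_of_integrable (fun x _ => hu x) (fun x _ => hv x) huv' hu'v huv
    have lhs : ∫ x : ℝ, u x * (-(u x * γ x)) = -∫ x : ℝ, (HeR (k+1) x)^2 * γ x := by
      rw [← integral_neg]
      congr 1; funext x; rw [hu_def]; ring
    have rhs : ∫ x : ℝ, (((k+1:ℕ):ℝ) * HeR k x) * (HeR k x * γ x) =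
        ((k+1:ℕ):ℝ) * ∫ x : ℝ, (HeR k x)^2 * γ x := by
      rw [← integral_const_mul]
      congr 1; funext x; ring
    rw [lhs, rhs] at key
    have : ∫ x : ℝ, (HeR (k+1) x)^2 * γ x = ((k+1:ℕ):ℝ) * ∫ x : ℝ, (HeR k x)^2 * γ x := by
      have := neg_injective key
      linarith [this]
    rw [hγ_def] at this
    rw [this, ih, Nat.factorial_succ]
    push_cast
    ring


section Gpd
variable {𝕜 : Type*} [NontriviallyNormedField 𝕜]

def gpd (n : ℕ) (j : Fin n) (f : (Fin n → 𝕜) → 𝕜) : (Fin n → 𝕜) → 𝕜 :=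
  fun x => fderiv 𝕜 f x (Pi.single j 1)

variable (φ : ℕ → 𝕜 → 𝕜)

lemma prod_update_phi {n : ℕ} (k : Fin n → ℕ) (j : Fin n) (m : ℕ) (x : Fin n → 𝕜) :
    ∏ i, φ (Function.update k j m i) (x i) =
      φ m (x j) * ∏ i ∈ Finset.univ \ {j}, φ (k i) (x i) := by
  rw [← Finset.prod_update_of_mem (Finset.mem_univ j) (fun i => φ (k i) (x i)) (φ m (x j))]

  refine Finset.prod_congr rfl fun i _ => ?_
  rcases eq_or_ne i j with rfl | h
  · simp
  · simp [Function.update_of_ne h]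

lemma gpd_mono (hφ : ∀ k x, HasDerivAt (φ k) ((k : 𝕜) * φ (k-1) x) x) (n : ℕ) (j : Fin n) (c : 𝕜) (k : Fin n → ℕ) :
    gpd n j (fun x => c * ∏ i, φ (k i) (x i)) =
      fun x => (c * (k j : 𝕜)) * ∏ i, φ (Function.update k j (k j - 1) i) (x i) := by
  funext x
  have hg : ∀ i : Fin n, HasFDerivAt (fun y : Fin n → 𝕜 => φ (k i) (y i))
      (((k i : 𝕜) * φ (k i - 1) (x i)) •
        (ContinuousLinearMap.proj (R := 𝕜) (φ := fun _ : Fin n => 𝕜) i)) x := by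
    intro i
    have hp : HasFDerivAt (fun y : Fin n → 𝕜 => y i)
        (ContinuousLinearMap.proj (R := 𝕜) (φ := fun _ : Fin n => 𝕜) i) x :=
      (ContinuousLinearMap.proj (R := 𝕜) (φ := fun _ : Fin n => 𝕜) i).hasFDerivAt
    have h2 := (hφ (k i) (x i)).comp_hasFDerivAt x hp
    simpa [Function.comp_def] using h2
  have hprod := HasFDerivAt.finset_prod (u := Finset.univ) (fun i _ => hg i)
  have hc := hprod.const_mul c
  rw [gpd, hc.fderiv]
  simp only [ContinuousLinearMap.smul_apply, ContinuousLinearMap.coe_sum', Finset.sum_apply,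
    ContinuousLinearMap.proj_apply, smul_eq_mul]
  rw [Finset.sum_eq_single j]
  · rw [prod_update_phi, Finset.erase_eq]
    simp only [Pi.single_eq_same]
    ring
  · intro i _ hij
    simp [Pi.single_eq_of_ne hij]
  · intro h; exact absurd (Finset.mem_univ j) h

lemma gpd_iter (hφ : ∀ k x, HasDerivAt (φ k) ((k : 𝕜) * φ (k-1) x) x) (n : ℕ) (j : Fin n) (a : ℕ) (c : 𝕜) (k : Fin n → ℕ) :
    (gpd n j)^[a] (fun x => c * ∏ i, φ (k i) (x i)) =
      fun x => (c * (Nat.descFactorial (k j) a : 𝕜)) *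
        ∏ i, φ (Function.update k j (k j - a) i) (x i) := by
  induction a with
  | zero => simp
  | succ a ih =>
    rw [Function.iterate_succ_apply', ih, gpd_mono φ hφ]
    have e1 : Function.update (Function.update k j (k j - a)) j
        (Function.update k j (k j - a) j - 1) = Function.update k j (k j - (a+1)) := by
      rw [Function.update_self, Function.update_idem, Nat.sub_sub]
    rw [e1]
    funext x
    rw [Function.update_self, Nat.descFactorial_succ]
    push_cast
    ring

lemma gpd_foldr (hφ : ∀ k x, HasDerivAt (φ k) ((k : 𝕜) * φ (k-1) x) x) (n : ℕ) (α : Fin n → ℕ) (l : List (Fin n)) (hnd : l.Nodup) :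
    ∀ (c : 𝕜) (k : Fin n → ℕ),
    (l.map (fun j => (gpd n j)^[α j])).foldr (· ∘ ·) id (fun x => c * ∏ i, φ (k i) (x i)) =
      fun x => (c * ∏ j ∈ l.toFinset, (Nat.descFactorial (k j) (α j) : 𝕜)) *
        ∏ i, φ (if i ∈ l then k i - α i else k i) (x i) := by
  induction l with
  | nil => intro c k; simp
  | cons j l ih =>
    intro c k
    have hjl : j ∉ l := (List.nodup_cons.mp hnd).1
    rw [List.map_cons, List.foldr_cons, Function.comp_apply,
      ih (List.nodup_cons.mp hnd).2 c k, gpd_iter φ hφ]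
    have hkj : (if j ∈ l then k j - α j else k j) = k j := by simp [hjl]
    have e1 : Function.update (fun i => if i ∈ l then k i - α i else k i) j
        ((if j ∈ l then k j - α j else k j) - α j) =
        fun i => if i ∈ j :: l then k i - α i else k i := by
      funext i
      rcases eq_or_ne i j with rfl | h
      · simp [hjl]
      · simp [Function.update_of_ne h, List.mem_cons, h]
    rw [e1, hkj]
    funext x
    rw [List.toFinset_cons, Finset.prod_insert (by simpa using hjl)]
    ring

lemma gpd_multi (hφ : ∀ k x, HasDerivAt (φ k) ((k : 𝕜) * φ (k-1) x) x) (n : ℕ) (α : Fin n → ℕ) (c : 𝕜) (k : Fin n → ℕ) :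
    ((List.finRange n).map (fun j => (gpd n j)^[α j])).foldr (· ∘ ·) id
        (fun x => c * ∏ i, φ (k i) (x i)) =
      fun x => (c * ∏ j, (Nat.descFactorial (k j) (α j) : 𝕜)) *
        ∏ i, φ (k i - α i) (x i) := by
  rw [gpd_foldr φ hφ n α _ (List.nodup_finRange n) c k]
  simp [List.mem_finRange, List.toFinset_finRange]

end Gpd


lemma cmom (g : ℕ) :
    ∫ w : ℂ, ‖w‖ ^ (2*g) * Real.exp (-(‖w‖ ^ 2)) = π * g.factorial := by
  have h := Complex.integral_rpow_mul_exp_neg_rpow (p := 2) (q := ((2*g : ℕ) : ℝ))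
    (by norm_num) (by have : (0:ℝ) ≤ ((2*g:ℕ):ℝ) := Nat.cast_nonneg _; linarith)
  have e1 : (fun x : ℂ => ‖x‖ ^ ((2*g : ℕ) : ℝ) * Real.exp (-‖x‖ ^ (2:ℝ))) =
      fun w : ℂ => ‖w‖ ^ (2*g) * Real.exp (-(‖w‖ ^ 2)) := by
    funext w
    rw [Real.rpow_natCast, show (2:ℝ) = ((2:ℕ):ℝ) by norm_num, Real.rpow_natCast]
  rw [e1] at h
  rw [h]
  have e2 : (((2*g : ℕ) : ℝ) + 2) / 2 = (g : ℝ) + 1 := by push_cast; ring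
  rw [e2, Real.Gamma_nat_eq_factorial]
  ring

lemma gaussC_prod_integral (n : ℕ) (γ : Fin n → ℕ) :
    ∫ z, (∏ i, ‖z i‖ ^ (2 * γ i)) ∂(gaussC n) = ∏ i, ((γ i).factorial : ℝ) := by
  have hd : ∀ z : Fin n → ℂ, 0 ≤ π ^ (-(n:ℝ)) * Real.exp (-(∑ j, ‖z j‖ ^ 2)) := by
    intro z; positivity
  have hmeas : Measurable fun z : Fin n → ℂ =>
      Real.toNNReal (π ^ (-(n:ℝ)) * Real.exp (-(∑ j, ‖z j‖ ^ 2))) := by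
    apply Continuous.measurable
    apply continuous_real_toNNReal.comp
    apply Continuous.mul continuous_const
    apply Real.continuous_exp.comp
    apply Continuous.neg
    exact continuous_finset_sum _ fun j _ =>
      ((continuous_norm.comp (continuous_apply j)).pow 2)
  have h0 : gaussC n = volume.withDensity fun z =>
      ((Real.toNNReal (π ^ (-(n:ℝ)) * Real.exp (-(∑ j, ‖z j‖ ^ 2))) : NNReal) :
        ENNReal) := rfl
  rw [h0, integral_withDensity_eq_integral_smul hmeas]
  have e1 : (fun z : Fin n → ℂ =>
      Real.toNNReal (π ^ (-(n:ℝ)) * Real.exp (-(∑ j, ‖z j‖ ^ 2))) •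
        (∏ i, ‖z i‖ ^ (2 * γ i))) =
      fun z : Fin n → ℂ =>
        ∏ i, (π⁻¹ * (‖z i‖ ^ (2 * γ i) * Real.exp (-(‖z i‖ ^ 2)))) := by
    funext z
    rw [NNReal.smul_def, Real.coe_toNNReal _ (hd z)]
    rw [show (-(∑ j, ‖z j‖ ^ 2)) = ∑ j, (-(‖z j‖ ^ 2)) by
      rw [Finset.sum_neg_distrib]]
    rw [Real.exp_sum, Real.rpow_neg Real.pi_pos.le, Real.rpow_natCast, ← inv_pow,
      smul_eq_mul, show (π⁻¹:ℝ)^n = ∏ _i : Fin n, (π⁻¹:ℝ) by simp,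
      ← Finset.prod_mul_distrib, ← Finset.prod_mul_distrib]
    exact Finset.prod_congr rfl fun i _ => by ring
  rw [e1, MeasureTheory.volume_pi, MeasureTheory.integral_fintype_prod_eq_prod (𝕜 := ℝ)
    (f := fun i (w : ℂ) => π⁻¹ * (‖w‖ ^ (2 * γ i) * Real.exp (-(‖w‖ ^ 2))))]
  refine Finset.prod_congr rfl fun i _ => ?_
  rw [integral_const_mul, cmom]
  rw [← mul_assoc, inv_mul_cancel₀ Real.pi_ne_zero, one_mul]

lemma gaussR_prod_integral (n : ℕ) (γ : Fin n → ℕ) :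
    ∫ x, (∏ i, (HeR (γ i) (x i))^2) ∂(gaussR n) = ∏ i, ((γ i).factorial : ℝ) := by
  have h2π : (0:ℝ) < 2 * π := by positivity
  have hd : ∀ x : Fin n → ℝ, 0 ≤ (2*π) ^ (-(n:ℝ)/2) * Real.exp (-(∑ j, (x j)^2)/2) := by
    intro x; positivity
  have hmeas : Measurable fun x : Fin n → ℝ =>
      Real.toNNReal ((2*π) ^ (-(n:ℝ)/2) * Real.exp (-(∑ j, (x j)^2)/2)) := by
    apply Continuous.measurable
    apply continuous_real_toNNReal.comp
    apply Continuous.mul continuous_const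
    apply Real.continuous_exp.comp
    apply Continuous.div_const
    apply Continuous.neg
    exact continuous_finset_sum _ fun j _ => ((continuous_apply j).pow 2)
  have h0 : gaussR n = volume.withDensity fun x =>
      ((Real.toNNReal ((2*π) ^ (-(n:ℝ)/2) * Real.exp (-(∑ j, (x j)^2)/2)) : NNReal) :
        ENNReal) := rfl
  rw [h0, integral_withDensity_eq_integral_smul hmeas]
  have ec : ((2*π) ^ (-(n:ℝ)/2)) = ((Real.sqrt (2*π))⁻¹)^n := by
    rw [Real.sqrt_eq_rpow, ← Real.rpow_neg h2π.le, ← Real.rpow_natCast ((2*π) ^ (-(1/(2:ℝ)))) n,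
      ← Real.rpow_mul h2π.le]
    congr 1
    ring
  have e1 : (fun x : Fin n → ℝ =>
      Real.toNNReal ((2*π) ^ (-(n:ℝ)/2) * Real.exp (-(∑ j, (x j)^2)/2)) •
        (∏ i, (HeR (γ i) (x i))^2)) =
      fun x : Fin n → ℝ =>
        ∏ i, ((Real.sqrt (2*π))⁻¹ * ((HeR (γ i) (x i))^2 * Real.exp (-((x i)^2)/2))) := by
    funext x
    rw [NNReal.smul_def, Real.coe_toNNReal _ (hd x)]
    rw [show (-(∑ j, (x j)^2)/2) = ∑ j, (-((x j)^2)/2) by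
      rw [← Finset.sum_div, Finset.sum_neg_distrib]]
    rw [Real.exp_sum, ec, smul_eq_mul,
      show ((Real.sqrt (2*π))⁻¹:ℝ)^n = ∏ _i : Fin n, ((Real.sqrt (2*π))⁻¹:ℝ) by simp,
      ← Finset.prod_mul_distrib, ← Finset.prod_mul_distrib]
    exact Finset.prod_congr rfl fun i _ => by ring
  rw [e1, MeasureTheory.volume_pi, MeasureTheory.integral_fintype_prod_eq_prod (𝕜 := ℝ)
    (f := fun i (t : ℝ) => (Real.sqrt (2*π))⁻¹ * ((HeR (γ i) t)^2 * Real.exp (-(t^2)/2)))]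
  refine Finset.prod_congr rfl fun i _ => ?_
  rw [integral_const_mul, HeR_L2]
  have hs : Real.sqrt (2*π) ≠ 0 := (Real.sqrt_pos.mpr h2π).ne'
  field_simp


lemma L2n_cmono (n : ℕ) (c : ℂ) (γ : Fin n → ℕ) :
    L2n (gaussC n) (fun z => c * ∏ i, (z i) ^ (γ i)) =
      ‖c‖ * Real.sqrt (∏ i, ((γ i).factorial : ℝ)) := by
  rw [L2n]
  have e : (fun z : Fin n → ℂ => ‖c * ∏ i, (z i)^(γ i)‖^2) =
      fun z => ‖c‖^2 * ∏ i, ‖z i‖ ^ (2 * γ i) := by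
    funext z
    rw [norm_mul, mul_pow, norm_prod]
    congr 1
    rw [← Finset.prod_pow]
    exact Finset.prod_congr rfl fun i _ => by
      rw [norm_pow, ← pow_mul, mul_comm]
  rw [e, integral_const_mul, gaussC_prod_integral]
  rw [Real.sqrt_mul (sq_nonneg _), Real.sqrt_sq (norm_nonneg _)]

lemma L2n_rmono (n : ℕ) (c : ℝ) (γ : Fin n → ℕ) :
    L2n (gaussR n) (fun x => c * ∏ i, HeR (γ i) (x i)) =
      |c| * Real.sqrt (∏ i, ((γ i).factorial : ℝ)) := by
  rw [L2n]
  have e : (fun x : Fin n → ℝ => ‖c * ∏ i, HeR (γ i) (x i)‖^2) =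
      fun x => c^2 * ∏ i, (HeR (γ i) (x i))^2 := by
    funext x
    rw [Real.norm_eq_abs, sq_abs, mul_pow, Finset.prod_pow]
  rw [e, integral_const_mul, gaussR_prod_integral]
  rw [Real.sqrt_mul (sq_nonneg _), Real.sqrt_sq_eq_abs]

lemma H1_eq (k : ℕ) (s : ℝ) :
    H1 k s = (Real.sqrt 2)^k * HeR k (Real.sqrt 2 * s) := by
  have hg : ContDiff ℝ k (fun y : ℝ => Real.exp (-(y^2/2))) :=
    (((contDiff_id.pow 2).div_const 2).neg).exp
  have e0 : (fun u : ℝ => Real.exp (-(u^2))) =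
      fun u => Real.exp (-((Real.sqrt 2 * u)^2/2)) := by
    funext u
    congr 1
    rw [mul_pow, Real.sq_sqrt (by norm_num : (0:ℝ) ≤ 2)]
    ring
  rw [H1, e0]
  have h2 : (deriv^[k] fun u : ℝ => Real.exp (-((Real.sqrt 2*u)^2/2))) s =
      (Real.sqrt 2)^k * deriv^[k] (fun y : ℝ => Real.exp (-(y^2/2))) (Real.sqrt 2 * s) := by
    have h := iteratedDeriv_comp_const_mul (f := fun y : ℝ => Real.exp (-(y^2/2))) (n := k)
      hg (Real.sqrt 2)
    have h' := congrFun h s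
    rw [iteratedDeriv_eq_iterate, iteratedDeriv_eq_iterate] at h'
    exact h'
  rw [h2, Polynomial.deriv_gaussian_eq_hermite_mul_gaussian]
  have e3 : -((Real.sqrt 2 * s)^2/2) = -(s^2) := by
    rw [mul_pow, Real.sq_sqrt (by norm_num : (0:ℝ) ≤ 2)]
    ring
  have e3' : (Real.sqrt 2 * s)^2/2 = s^2 := by
    rw [mul_pow, Real.sq_sqrt (by norm_num : (0:ℝ) ≤ 2)]
    ring
  rw [e3']
  have e4 : Real.exp (s^2) * Real.exp (-(s^2)) = 1 := by rw [← Real.exp_add]; simp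
  have e5 : ((-1:ℝ))^k * ((-1:ℝ))^k = 1 := by rw [← mul_pow]; norm_num
  have key : ∀ A : ℝ, (-1:ℝ)^k * Real.exp (s^2) *
      ((Real.sqrt 2)^k * ((-1:ℝ)^k * A * Real.exp (-(s^2)))) =
      (((-1:ℝ)^k*(-1:ℝ)^k) * (Real.exp (s^2) * Real.exp (-(s^2)))) * ((Real.sqrt 2)^k * A) :=
    fun A => by ring
  rw [key, e4, e5, one_mul, one_mul]
  rfl

lemma hermiteF_eq (n : ℕ) (β : Fin n → ℕ) :
    hermiteF n β = fun x =>
      (Real.sqrt (∏ j, ((β j).factorial : ℝ)))⁻¹ * ∏ j, HeR (β j) (x j) := by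
  funext x
  rw [hermiteF]
  have hne : Real.sqrt 2 ≠ 0 := by positivity
  have hH : ∀ j, H1 (β j) (x j / Real.sqrt 2) = (Real.sqrt 2)^(β j) * HeR (β j) (x j) := by
    intro j
    rw [H1_eq]
    congr 2
    rw [mul_comm, div_mul_cancel₀ _ hne]
  rw [Finset.prod_congr rfl (fun j _ => hH j), Finset.prod_mul_distrib,
    Finset.prod_pow_eq_pow_sum]
  have hsq : Real.sqrt ((2:ℝ)^(∑ j, β j)) = (Real.sqrt 2)^(∑ j, β j) := by
    have h2 : ((Real.sqrt 2)^(∑ j, β j))^2 = (2:ℝ)^(∑ j, β j) := by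
      rw [← pow_mul, mul_comm, pow_mul, Real.sq_sqrt (by norm_num : (0:ℝ) ≤ 2)]
    rw [← h2, Real.sqrt_sq (pow_nonneg (Real.sqrt_nonneg 2) _)]
  rw [Real.sqrt_mul (by positivity), hsq, mul_inv]
  have hs2 : ((Real.sqrt 2)^(∑ j, β j) : ℝ) ≠ 0 := pow_ne_zero _ hne
  field_simp

lemma pdCMulti_eB (n : ℕ) (α β : Fin n → ℕ) :
    pdCMulti n α (eB n β) = fun z =>
      ((((Real.sqrt (∏ j, ((β j).factorial : ℝ)) : ℝ) : ℂ))⁻¹ *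
        ((∏ j, (β j).descFactorial (α j) : ℕ) : ℂ)) * ∏ i, (z i)^(β i - α i) := by
  have heB : eB n β = fun z : Fin n → ℂ =>
      (((Real.sqrt (∏ j, ((β j).factorial : ℝ)) : ℝ) : ℂ))⁻¹ *
        ∏ i, (fun (k : ℕ) (w : ℂ) => w^k) (β i) (z i) := by
    funext z
    rw [eB, div_eq_mul_inv, mul_comm]
  have hid : pdCMulti n α (eB n β) =
      ((List.finRange n).map (fun j => (gpd (𝕜 := ℂ) n j)^[α j])).foldr (· ∘ ·) id
        (eB n β) := rfl
  rw [hid, heB, gpd_multi (fun (k : ℕ) (w : ℂ) => w^k) (fun k z => hasDerivAt_pow k z) n α _ β]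
  funext z
  push_cast
  ring

lemma pdRMulti_hermiteF (n : ℕ) (α β : Fin n → ℕ) :
    pdRMulti n α (hermiteF n β) = fun x =>
      ((Real.sqrt (∏ j, ((β j).factorial : ℝ)))⁻¹ *
        ((∏ j, (β j).descFactorial (α j) : ℕ) : ℝ)) * ∏ i, HeR (β i - α i) (x i) := by
  have hid : pdRMulti n α (hermiteF n β) =
      ((List.finRange n).map (fun j => (gpd (𝕜 := ℝ) n j)^[α j])).foldr (· ∘ ·) id
        (hermiteF n β) := rfl
  rw [hid, hermiteF_eq, gpd_multi HeR hasDerivAt_HeR n α _ β]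
  funext x
  push_cast
  ring

end AuxFock

theorem fock_sobolev_norm_eq_gauss_sobolev_norm (n m : ℕ) (β : Fin n → ℕ) :
    FSnorm n m (eB n β) = GSnormR n m (hermiteF n β) := by
  unfold FSnorm GSnormR
  refine Finset.sum_congr rfl fun α _ => ?_
  rw [pdCMulti_eB n α β, pdRMulti_hermiteF n α β,
    L2n_cmono n _ (fun i => β i - α i), L2n_rmono n _ (fun i => β i - α i)]
  congr 1
  have e : ((((Real.sqrt (∏ j, ((β j).factorial : ℝ)) : ℝ) : ℂ))⁻¹ *
      ((∏ j, (β j).descFactorial (α j) : ℕ) : ℂ)) =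
      ((((Real.sqrt (∏ j, ((β j).factorial : ℝ)))⁻¹ *
        ((∏ j, (β j).descFactorial (α j) : ℕ) : ℝ) : ℝ)) : ℂ) := by
    push_cast
    ring
  rw [e, Complex.norm_real, Real.norm_eq_abs]
end

section
/- If f is a smooth function on ℝⁿ that is 2N-periodic in each coordinate and vanishes on [−N,N]ⁿ \ [−N/(2√n), N/(2√n)]ⁿ, then for every multi-index α, ∫_{ℝⁿ} |∂^α f(x)|² dγ(x) ≤ (n e^{−N²}/(1−e^{−N²})^n + 1) ∫_{[−N/(2√n), N/(2√n)]ⁿ} |∂^α f(x)|² dγ(x) < ∞; in particular f ∈ W^{2,m}(γ) for every m. -/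
open MeasureTheory Finset

open MeasureTheory Set Filter ENNReal

noncomputable section PGS

namespace PGS

variable (n : ℕ) (N s : ℝ)

def tv (y : Fin n → ℤ) : Fin n → ℝ := fun j => 2 * N * (y j : ℝ)

def Us : Set (Fin n → ℝ) := {x | (∀ j, |x j| < N) ∧ ¬ (∀ j, |x j| ≤ s)}

lemma isOpen_Us : IsOpen (Us n N s) := by
  have h1 : IsOpen {x : Fin n → ℝ | ∀ j, |x j| < N} := by
    have : {x : Fin n → ℝ | ∀ j, |x j| < N} = ⋂ j, {x : Fin n → ℝ | |x j| < N} := by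
      ext x; simp
    rw [this]
    exact isOpen_iInter_of_finite fun j =>
      isOpen_lt (continuous_abs.comp (continuous_apply j)) continuous_const
  have h2 : IsOpen {x : Fin n → ℝ | ¬ ∀ j, |x j| ≤ s} := by
    have : {x : Fin n → ℝ | ¬ ∀ j, |x j| ≤ s} = ⋃ j, {x : Fin n → ℝ | s < |x j|} := by
      ext x; simp [not_le]
    rw [this]
    exact isOpen_iUnion fun j =>
      isOpen_lt continuous_const (continuous_abs.comp (continuous_apply j))
  exact h1.inter h2

/-- The bundle of properties preserved by partial derivatives. -/
def Pprop (g : (Fin n → ℝ) → ℝ) : Prop :=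
  ContDiff ℝ (⊤ : ℕ∞) g ∧ (∀ x y, g (x + tv n N y) = g x) ∧ (∀ x ∈ Us n N s, g x = 0)

lemma pdR_step (j : Fin n) {g : (Fin n → ℝ) → ℝ} (h : Pprop n N s g) :
    Pprop n N s (pdR n j g) := by
  obtain ⟨hg, hper, hvan⟩ := h
  refine ⟨?_, ?_, ?_⟩
  · exact (hg.fderiv_right (by simp)).clm_apply contDiff_const
  · intro x y
    have hd : DifferentiableAt ℝ g (x + tv n N y) := (hg.differentiable (by simp)) _
    have hcomp : HasFDerivAt (fun t => g (t + tv n N y))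
        ((fderiv ℝ g (x + tv n N y)).comp (ContinuousLinearMap.id ℝ (Fin n → ℝ))) x :=
      hd.hasFDerivAt.comp x ((hasFDerivAt_id x).add_const _)
    have heq : (fun t => g (t + tv n N y)) = g := funext fun t => hper t y
    rw [heq] at hcomp
    have : fderiv ℝ g x = fderiv ℝ g (x + tv n N y) := by
      rw [hcomp.fderiv]; ext v; simp
    simp only [pdR, this]
  · intro x hx
    have h0 : g =ᶠ[nhds x] (fun _ => 0) :=
      Filter.eventuallyEq_of_mem ((isOpen_Us n N s).mem_nhds hx) hvan
    have : fderiv ℝ g x = 0 := by rw [h0.fderiv_eq]; exact fderiv_const_apply 0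
    simp [pdR, this]

lemma pdR_iter (j : Fin n) (k : ℕ) {g : (Fin n → ℝ) → ℝ} (h : Pprop n N s g) :
    Pprop n N s ((pdR n j)^[k] g) := by
  induction k with
  | zero => simpa using h
  | succ k ih => rw [Function.iterate_succ_apply']; exact pdR_step n N s j ih

lemma pdRMulti_prop (α : Fin n → ℕ) {g : (Fin n → ℝ) → ℝ} (h : Pprop n N s g) :
    Pprop n N s (pdRMulti n α g) := by
  have key : ∀ l : List (Fin n),
      Pprop n N s (((l.map fun j => (pdR n j)^[α j]).foldr (· ∘ ·) id) g) := by
    intro l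
    induction l with
    | nil => simpa using h
    | cons a l ih =>
      have : ((((a :: l).map fun j => (pdR n j)^[α j]).foldr (· ∘ ·) id) g)
          = (pdR n a)^[α a] (((l.map fun j => (pdR n j)^[α j]).foldr (· ∘ ·) id) g) := by
        simp [Function.comp]
      rw [this]
      exact pdR_iter n N s a (α a) ih
  exact key (List.finRange n)


lemma exists_reduce (hN : 0 < N) (x : Fin n → ℝ) :
    ∃ y : Fin n → ℤ, ∀ j, -N ≤ x j - 2*N*(y j : ℝ) ∧ x j - 2*N*(y j : ℝ) < N := by
  have h2N : (0:ℝ) < 2*N := by linarith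
  refine ⟨fun j => ⌊(x j + N) / (2*N)⌋, fun j => ?_⟩
  set z := (x j + N) / (2*N) with hz
  have hf1 : (⌊z⌋:ℝ) * (2*N) ≤ x j + N := by
    have h := Int.floor_le z
    rwa [le_div_iff₀ h2N] at h
  have hf2 : x j + N < ((⌊z⌋:ℝ) + 1) * (2*N) := by
    have h := Int.lt_floor_add_one z
    rwa [div_lt_iff₀ h2N] at h
  constructor <;> nlinarith

lemma bounded_of_periodic (hN : 0 < N) {g : (Fin n → ℝ) → ℝ}
    (hc : Continuous g) (hper : ∀ x y, g (x + tv n N y) = g x) :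
    ∃ M : ℝ, 0 ≤ M ∧ ∀ x, |g x| ≤ M := by
  have hK : IsCompact (Set.univ.pi fun _ : Fin n => Icc (-N) N) :=
    isCompact_univ_pi fun _ => isCompact_Icc
  obtain ⟨M, hM⟩ := hK.exists_bound_of_continuousOn hc.continuousOn
  refine ⟨max M 0, le_max_right _ _, fun x => ?_⟩
  obtain ⟨y, hy⟩ := exists_reduce n N hN x
  have hx : x = (fun j => x j - 2*N*(y j : ℝ)) + tv n N y := by
    funext j; simp [tv]
  have h1 : g x = g (fun j => x j - 2*N*(y j : ℝ)) := by
    conv_lhs => rw [hx]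
    exact hper _ y
  rw [h1]
  refine le_trans ?_ (le_max_left M 0)
  have := hM (fun j => x j - 2*N*(y j : ℝ)) ?_
  · simpa using this
  · intro j _
    exact ⟨(hy j).1, (hy j).2.le⟩


lemma tsum_int_split (b : ℤ → ℝ≥0∞) :
    ∑' k : ℤ, b k = b 0 + ∑' m : ℕ, (b ((m:ℤ)+1) + b (-((m:ℤ)+1))) := by
  have e5 : ∑' (m:ℕ), b (m:ℤ) = b 0 + ∑' (m:ℕ), b ((m:ℤ)+1) := by
    rw [tsum_eq_zero_add' ENNReal.summable]
    norm_num
  rw [tsum_of_nat_of_neg_add_one ENNReal.summable ENNReal.summable, e5,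
    ENNReal.tsum_add, add_assoc]

lemma coord_sum_le {N v : ℝ} (hN : 0 < N) (hv : |v| ≤ N / 2) :
    ∑' k : ℤ, ENNReal.ofReal (Real.exp (-(2*N^2*(k:ℝ)^2 + 2*N*(k:ℝ)*v))) ≤
      ENNReal.ofReal (1 / (1 - Real.exp (-N^2))) := by
  set q : ℝ := Real.exp (-N^2) with hqdef
  have hq0 : 0 < q := Real.exp_pos _
  have hq1 : q < 1 := by
    rw [hqdef, Real.exp_lt_one_iff]; nlinarith
  have h1q : 0 < 1 - q := by linarith
  have hq2 : q^2 < 1 := by nlinarith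
  -- the key pairing estimate
  have key : ∀ m : ℕ,
      Real.exp (-(2*N^2*((m:ℝ)+1)^2 + 2*N*((m:ℝ)+1)*v)) +
        Real.exp (-(2*N^2*((m:ℝ)+1)^2 + 2*N*(-((m:ℝ)+1))*v)) ≤
      q^(2*m+1) + q^(2*m+2) := by
    intro m
    set k : ℝ := (m:ℝ)+1 with hk
    have hk1 : 1 ≤ k := by simp [hk]
    have hk0 : 0 < k := by linarith
    have habs : |2*N*k*v| ≤ |N^2*k| := by
      have h1 : |2*N*k*v| = 2*N*k*|v| := by
        rw [abs_mul, abs_of_nonneg (by positivity : (0:ℝ) ≤ 2*N*k)]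
      have h2 : |N^2*k| = N^2*k := abs_of_nonneg (by positivity)
      rw [h1, h2]
      nlinarith [mul_le_mul_of_nonneg_left hv (by positivity : (0:ℝ) ≤ 2*N*k)]
    have hcosh := Real.cosh_le_cosh.mpr habs
    rw [Real.cosh_eq, Real.cosh_eq] at hcosh
    have hmul : Real.exp (-(2*N^2*k^2)) * (Real.exp (2*N*k*v) + Real.exp (-(2*N*k*v))) ≤
        Real.exp (-(2*N^2*k^2)) * (Real.exp (N^2*k) + Real.exp (-(N^2*k))) := by
      apply mul_le_mul_of_nonneg_left _ (Real.exp_pos _).le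
      linarith
    have e1 : Real.exp (-(2*N^2*k^2 + 2*N*k*v))
        = Real.exp (-(2*N^2*k^2)) * Real.exp (-(2*N*k*v)) := by
      rw [← Real.exp_add]; ring_nf
    have e2 : Real.exp (-(2*N^2*k^2 + 2*N*(-k)*v))
        = Real.exp (-(2*N^2*k^2)) * Real.exp (2*N*k*v) := by
      rw [← Real.exp_add]; ring_nf
    have e3 : Real.exp (-(2*N^2*k^2)) * Real.exp (N^2*k) = Real.exp (-(2*N^2*k^2) + N^2*k) := by
      rw [← Real.exp_add]
    have e4 : Real.exp (-(2*N^2*k^2)) * Real.exp (-(N^2*k)) =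
        Real.exp (-(2*N^2*k^2) - N^2*k) := by
      rw [← Real.exp_add]; ring_nf
    have g1 : Real.exp (-(2*N^2*k^2) + N^2*k) ≤ q^(2*m+1) := by
      have hq : q^(2*m+1) = Real.exp (-N^2 * (2*(m:ℝ)+1)) := by
        rw [hqdef, ← Real.exp_nat_mul]; congr 1; push_cast; ring
      rw [hq, Real.exp_le_exp]
      have he : -N^2*(2*(m:ℝ)+1) = -(N^2 * (2*k-1)) := by rw [hk]; ring
      rw [he]
      nlinarith [mul_nonneg (mul_nonneg (sq_nonneg N) (by linarith : (0:ℝ) ≤ 2*k-1))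
        (by linarith : (0:ℝ) ≤ k-1)]
    have g2 : Real.exp (-(2*N^2*k^2) - N^2*k) ≤ q^(2*m+2) := by
      have hq : q^(2*m+2) = Real.exp (-N^2 * (2*(m:ℝ)+2)) := by
        rw [hqdef, ← Real.exp_nat_mul]; congr 1; push_cast; ring
      rw [hq, Real.exp_le_exp]
      have he : -N^2*(2*(m:ℝ)+2) = -(N^2 * (2*k)) := by rw [hk]; ring
      rw [he]
      nlinarith [mul_nonneg (mul_nonneg (sq_nonneg N) hk0.le)
        (by linarith : (0:ℝ) ≤ k-1)]
    calc Real.exp (-(2*N^2*k^2 + 2*N*k*v)) + Real.exp (-(2*N^2*k^2 + 2*N*(-k)*v))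
        = Real.exp (-(2*N^2*k^2)) * (Real.exp (2*N*k*v) + Real.exp (-(2*N*k*v))) := by
          rw [e1, e2]; ring
      _ ≤ Real.exp (-(2*N^2*k^2)) * (Real.exp (N^2*k) + Real.exp (-(N^2*k))) := hmul
      _ = Real.exp (-(2*N^2*k^2) + N^2*k) + Real.exp (-(2*N^2*k^2) - N^2*k) := by
          rw [mul_add, e3, e4]
      _ ≤ q^(2*m+1) + q^(2*m+2) := add_le_add g1 g2
  rw [tsum_int_split (fun k : ℤ =>
    ENNReal.ofReal (Real.exp (-(2*N^2*(k:ℝ)^2 + 2*N*(k:ℝ)*v))))]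
  simp only [Int.cast_zero]
  have hb0 : ENNReal.ofReal (Real.exp (-(2*N^2*(0:ℝ)^2 + 2*N*(0:ℝ)*v))) = 1 := by
    norm_num
  rw [hb0]
  have hle : ∀ m : ℕ,
      ENNReal.ofReal (Real.exp (-(2*N^2*(((m:ℤ)+1 : ℤ):ℝ)^2 + 2*N*(((m:ℤ)+1 : ℤ):ℝ)*v))) +
        ENNReal.ofReal (Real.exp (-(2*N^2*((-((m:ℤ)+1) : ℤ):ℝ)^2 + 2*N*((-((m:ℤ)+1) : ℤ):ℝ)*v)))
      ≤ ENNReal.ofReal (q^(2*m+1) + q^(2*m+2)) := by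
    intro m
    rw [show (((m:ℤ)+1 : ℤ):ℝ) = (m:ℝ)+1 by push_cast; ring,
      show ((-((m:ℤ)+1) : ℤ):ℝ) = -((m:ℝ)+1) by push_cast; ring,
      show (-((m:ℝ)+1))^2 = ((m:ℝ)+1)^2 by ring,
      ← ENNReal.ofReal_add (Real.exp_pos _).le (Real.exp_pos _).le]
    exact ENNReal.ofReal_le_ofReal (key m)
  have hsummable : Summable (fun m : ℕ => q^(2*m+1) + q^(2*m+2)) := by
    apply Summable.add
    · exact ((summable_geometric_of_lt_one (by positivity) hq2).mul_left q).congr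
        fun m => by rw [← pow_mul]; ring
    · exact ((summable_geometric_of_lt_one (by positivity) hq2).mul_left (q^2)).congr
        fun m => by rw [← pow_mul]; ring
  have htsum : ∑' m : ℕ, (q^(2*m+1) + q^(2*m+2)) = q/(1-q) := by
    have e1 : (fun m : ℕ => q^(2*m+1)) = fun m : ℕ => q * (q^2)^m := by
      funext m; rw [← pow_mul]; ring
    have e2 : (fun m : ℕ => q^(2*m+2)) = fun m : ℕ => q^2 * (q^2)^m := by
      funext m; rw [← pow_mul]; ring
    rw [Summable.tsum_add (((summable_geometric_of_lt_one (by positivity) hq2).mul_left q).congr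
        fun m => by rw [← pow_mul]; ring)
      (((summable_geometric_of_lt_one (by positivity) hq2).mul_left (q^2)).congr
        fun m => by rw [← pow_mul]; ring), e1, e2,
      tsum_mul_left, tsum_mul_left, tsum_geometric_of_lt_one (by positivity) hq2]
    rw [div_eq_mul_inv]
    have h12 : 1 - q^2 = (1-q)*(1+q) := by ring
    have h1q' : (0:ℝ) < 1 + q := by linarith
    rw [h12, mul_inv]
    field_simp
  have htail : (∑' m : ℕ,
      (ENNReal.ofReal (Real.exp (-(2*N^2*(((m:ℤ)+1 : ℤ):ℝ)^2 + 2*N*(((m:ℤ)+1 : ℤ):ℝ)*v))) +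
        ENNReal.ofReal (Real.exp (-(2*N^2*((-((m:ℤ)+1) : ℤ):ℝ)^2 + 2*N*((-((m:ℤ)+1) : ℤ):ℝ)*v)))))
      ≤ ENNReal.ofReal (q/(1-q)) := by
    refine le_trans (ENNReal.tsum_le_tsum hle) ?_
    rw [← ENNReal.ofReal_tsum_of_nonneg (fun m => by positivity) hsummable, htsum]
  calc (1 : ℝ≥0∞) + _ ≤ 1 + ENNReal.ofReal (q/(1-q)) := add_le_add_right htail 1
    _ = ENNReal.ofReal (1 + q/(1-q)) := by
        rw [ENNReal.ofReal_add (by norm_num) (by positivity), ENNReal.ofReal_one]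
    _ = ENNReal.ofReal (1/(1-q)) := by
        congr 1
        field_simp
        ring


def rr (y : Fin n → ℤ) (u : Fin n → ℝ) : ℝ≥0∞ :=
  ENNReal.ofReal (Real.exp (-∑ j, (2*N^2*((y j):ℝ)^2 + 2*N*((y j):ℝ)*(u j))))

lemma rr_eq_prod (y : Fin n → ℤ) (u : Fin n → ℝ) :
    rr n N y u = ∏ j, ENNReal.ofReal (Real.exp (-(2*N^2*((y j):ℝ)^2 + 2*N*((y j):ℝ)*(u j)))) := by
  rw [rr, ← ENNReal.ofReal_prod_of_nonneg (fun j _ => (Real.exp_pos _).le), ← Real.exp_sum]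
  congr 1
  rw [← Finset.sum_neg_distrib]

lemma tsum_rr_le (hN : 0 < N) (u : Fin n → ℝ) (hu : ∀ j, |u j| ≤ N/2) :
    ∑' y : Fin n → ℤ, rr n N y u ≤
      ENNReal.ofReal (1 / (1 - Real.exp (-N^2))) ^ n := by
  classical
  set b : Fin n → ℤ → ℝ≥0∞ := fun j k =>
    ENNReal.ofReal (Real.exp (-(2*N^2*(k:ℝ)^2 + 2*N*(k:ℝ)*(u j)))) with hbdef
  have hprod : ∀ y : Fin n → ℤ, rr n N y u = ∏ j, b j (y j) := fun y => rr_eq_prod n N y u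
  have hfin : ∀ F : Finset (Fin n → ℤ), (∑ y ∈ F, rr n N y u) ≤
      ENNReal.ofReal (1 / (1 - Real.exp (-N^2))) ^ n := by
    intro F
    have hsub : F ⊆ Fintype.piFinset (fun j => F.image fun y => y j) := by
      intro y hy
      rw [Fintype.mem_piFinset]
      exact fun j => Finset.mem_image_of_mem _ hy
    calc (∑ y ∈ F, rr n N y u)
        ≤ ∑ y ∈ Fintype.piFinset (fun j => F.image fun y => y j), rr n N y u :=
          Finset.sum_le_sum_of_subset hsub
      _ = ∑ y ∈ Fintype.piFinset (fun j => F.image fun y => y j), ∏ j, b j (y j) :=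
          Finset.sum_congr rfl fun y _ => hprod y
      _ = ∏ j, ∑ k ∈ F.image (fun y => y j), b j k := (Finset.prod_univ_sum _ _).symm
      _ ≤ ∏ j, ∑' k : ℤ, b j k :=
          Finset.prod_le_prod' fun j _ => ENNReal.sum_le_tsum _
      _ ≤ ∏ (j : Fin n), ENNReal.ofReal (1 / (1 - Real.exp (-N^2))) :=
          Finset.prod_le_prod' fun j _ => coord_sum_le hN (hu j)
      _ = ENNReal.ofReal (1 / (1 - Real.exp (-N^2))) ^ n := by
          rw [Finset.prod_const, Finset.card_univ, Fintype.card_fin]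
  rw [ENNReal.tsum_eq_iSup_sum]
  exact iSup_le hfin

lemma tsum_rr_ne_le (hN : 0 < N) (u : Fin n → ℝ) (hu : ∀ j, |u j| ≤ N/2) :
    (∑' y : Fin n → ℤ, if y = 0 then 0 else rr n N y u) ≤
      ENNReal.ofReal ((n : ℝ) * Real.exp (-N^2) / (1 - Real.exp (-N^2))^n) := by
  classical
  set q : ℝ := Real.exp (-N^2) with hqdef
  have hq0 : 0 < q := Real.exp_pos _
  have hq1 : q < 1 := by rw [hqdef, Real.exp_lt_one_iff]; nlinarith
  have h1q : 0 < 1 - q := by linarith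
  have hC0 : (0:ℝ) ≤ (n:ℝ) * q / (1-q)^n := by positivity
  have hsplit : (∑' y : Fin n → ℤ, rr n N y u)
      = rr n N 0 u + ∑' y : Fin n → ℤ, (if y = 0 then 0 else rr n N y u) := by
    rw [ENNReal.tsum_eq_add_tsum_ite 0]
    congr 1
    exact tsum_congr fun y => by by_cases h : y = 0 <;> simp [h]
  have h0 : rr n N 0 u = 1 := by
    rw [rr]
    norm_num
  have hBern : (1 / (1-q))^n ≤ (n:ℝ)*q/(1-q)^n + 1 := by
    have hb := one_add_mul_le_pow (show (-2:ℝ) ≤ -q by linarith) n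
    have hb' : 1 - (n:ℝ)*q ≤ (1-q)^n := by
      calc 1 - (n:ℝ)*q = 1 + (n:ℝ)*(-q) := by ring
        _ ≤ (1 + -q)^n := hb
        _ = (1-q)^n := by ring_nf
    have hpow : (0:ℝ) < (1-q)^n := pow_pos h1q n
    rw [div_pow, one_pow]
    rw [div_add' _ _ _ (ne_of_gt hpow)]
    gcongr
    linarith [hb']
  have hchain : (∑' y : Fin n → ℤ, (if y = 0 then 0 else rr n N y u)) + 1 ≤
      ENNReal.ofReal ((n:ℝ)*q/(1-q)^n) + 1 := by
    calc (∑' y : Fin n → ℤ, (if y = 0 then 0 else rr n N y u)) + 1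
        = rr n N 0 u + ∑' y : Fin n → ℤ, (if y = 0 then 0 else rr n N y u) := by
          rw [h0, add_comm]
      _ = ∑' y : Fin n → ℤ, rr n N y u := hsplit.symm
      _ ≤ ENNReal.ofReal (1 / (1 - q)) ^ n := tsum_rr_le n N hN u hu
      _ = ENNReal.ofReal ((1 / (1 - q))^n) := (ENNReal.ofReal_pow (by positivity) n).symm
      _ ≤ ENNReal.ofReal ((n:ℝ)*q/(1-q)^n + 1) := ENNReal.ofReal_le_ofReal hBern
      _ = ENNReal.ofReal ((n:ℝ)*q/(1-q)^n) + 1 := by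
          rw [ENNReal.ofReal_add hC0 (by norm_num), ENNReal.ofReal_one]
  exact (ENNReal.add_le_add_iff_right ENNReal.one_ne_top).mp hchain


lemma tsum_eq_add_tsum_ite' {β : Type*} [DecidableEq β] (f : β → ℝ≥0∞) (b : β) :
    ∑' x, f x = f b + ∑' x, (if x = b then 0 else f x) := by
  rw [ENNReal.tsum_eq_add_tsum_ite b]
  congr 1
  exact tsum_congr fun y => by by_cases h : y = b <;> simp [h]

def Bs (y : Fin n → ℤ) : Set (Fin n → ℝ) :=
  Set.univ.pi fun j => Ioo (2*N*((y j):ℝ) - s) (2*N*((y j):ℝ) + s)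

lemma measurableSet_Bs (y : Fin n → ℤ) : MeasurableSet (Bs n N s y) :=
  MeasurableSet.univ_pi fun _ => measurableSet_Ioo

lemma Bs_disjoint (hN : 0 < N) (hs2 : n ≠ 0 → s ≤ N/2) :
    Pairwise (Function.onFun Disjoint (Bs n N s)) := by
  intro y y' hne
  rw [Function.onFun, Set.disjoint_left]
  intro x hx hx'
  have hj : ∃ j, y j ≠ y' j := by
    by_contra h; push_neg at h; exact hne (funext h)
  obtain ⟨j, hj⟩ := hj
  have h1 := Set.mem_univ_pi.mp hx j
  have h2 := Set.mem_univ_pi.mp hx' j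
  rw [Set.mem_Ioo] at h1 h2
  have hsle : s ≤ N/2 := hs2 (Nat.pos_iff_ne_zero.mp j.pos)
  have d1 : |x j - 2*N*((y j):ℝ)| < s := abs_lt.mpr ⟨by linarith [h1.1], by linarith [h1.2]⟩
  have d2 : |x j - 2*N*((y' j):ℝ)| < s := abs_lt.mpr ⟨by linarith [h2.1], by linarith [h2.2]⟩
  have hge : (1:ℝ) ≤ |((y j):ℝ) - ((y' j):ℝ)| := by
    have h := Int.one_le_abs (sub_ne_zero.mpr hj)
    have : ((1:ℤ):ℝ) ≤ ((|y j - y' j| : ℤ):ℝ) := by exact_mod_cast h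
    push_cast at this
    convert this using 2
  have htri : |2*N*((y j):ℝ) - 2*N*((y' j):ℝ)| ≤
      |2*N*((y j):ℝ) - x j| + |x j - 2*N*((y' j):ℝ)| := abs_sub_le _ _ _
  rw [abs_sub_comm (2*N*((y j):ℝ)) (x j)] at htri
  have heq : |2*N*((y j):ℝ) - 2*N*((y' j):ℝ)| = 2*N*|((y j):ℝ) - ((y' j):ℝ)| := by
    rw [← mul_sub, abs_mul, abs_of_pos (by linarith : (0:ℝ) < 2*N)]
  nlinarith [heq, htri, hge, d1, d2]

lemma setLIntegral_translate (h : (Fin n → ℝ) → ℝ≥0∞) (c : Fin n → ℝ)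
    {A B : Set (Fin n → ℝ)} (hA : MeasurableSet A) (hB : MeasurableSet B)
    (hAB : ∀ u, u + c ∈ A ↔ u ∈ B) :
    ∫⁻ x in A, h x ∂volume = ∫⁻ u in B, h (u + c) ∂volume := by
  rw [← lintegral_indicator hA, ← lintegral_indicator hB,
    ← lintegral_add_right_eq_self (fun x => A.indicator h x) c]
  congr 1
  funext u
  by_cases hu : u ∈ B
  · rw [Set.indicator_of_mem ((hAB u).mpr hu) h, Set.indicator_of_mem hu]
  · rw [Set.indicator_of_notMem (fun hc => hu ((hAB u).mp hc)) h,
      Set.indicator_of_notMem hu]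

def densE : (Fin n → ℝ) → ℝ≥0∞ := fun x =>
  ENNReal.ofReal ((2 * Real.pi) ^ (-(n : ℝ) / 2) * Real.exp (-(∑ j, (x j) ^ 2) / 2))

lemma gaussR_eq : gaussR n = volume.withDensity (densE n) := rfl

lemma densE_shift (y : Fin n → ℤ) (u : Fin n → ℝ) :
    densE n (u + tv n N y) = densE n u * rr n N y u := by
  simp only [densE, rr]
  rw [← ENNReal.ofReal_mul (by positivity)]
  congr 1
  have hsum : ∑ j, ((u + tv n N y) j)^2
      = ∑ j, (u j)^2 + 2 * ∑ j, (2*N^2*((y j):ℝ)^2 + 2*N*((y j):ℝ)*(u j)) := by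
    rw [Finset.mul_sum, ← Finset.sum_add_distrib]
    refine Finset.sum_congr rfl fun j _ => ?_
    have : (u + tv n N y) j = u j + 2*N*((y j):ℝ) := rfl
    rw [this]; ring
  rw [hsum, mul_assoc]
  congr 1
  rw [← Real.exp_add]
  congr 1
  ring

def Zset : Set (Fin n → ℝ) := ⋃ (j : Fin n), ⋃ (m : ℤ),
  ({x : Fin n → ℝ | x j = 2*N*(m:ℝ) + N} ∪ {x : Fin n → ℝ | x j = 2*N*(m:ℝ) + s}
    ∪ {x : Fin n → ℝ | x j = 2*N*(m:ℝ) - s})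

lemma volume_Zset : volume (Zset n N s) = 0 := by
  refine measure_iUnion_null fun j => measure_iUnion_null fun m => ?_
  have hp : ∀ c : ℝ, volume {x : Fin n → ℝ | x j = c} = 0 := by
    intro c
    rw [MeasureTheory.volume_pi]
    exact MeasureTheory.Measure.pi_hyperplane (fun _ => (volume : Measure ℝ)) j c
  exact measure_union_null (measure_union_null (hp _) (hp _)) (hp _)


lemma main_lintegral (hN : 0 < N) (hs0 : 0 ≤ s) (hs2 : n ≠ 0 → s ≤ N/2)
    {g : (Fin n → ℝ) → ℝ} (hc : Continuous g)
    (hper : ∀ x y, g (x + tv n N y) = g x)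
    (hvan : ∀ x ∈ Us n N s, g x = 0) :
    ∫⁻ x, ENNReal.ofReal (g x ^ 2) ∂(gaussR n) ≤
      ENNReal.ofReal ((n:ℝ) * Real.exp (-N^2) / (1 - Real.exp (-N^2))^n + 1) *
        ∫⁻ x in Set.univ.pi (fun _ : Fin n => Icc (-s) s),
          ENNReal.ofReal (g x ^ 2) ∂(gaussR n) := by
  set q : ℝ := Real.exp (-N^2) with hqdef
  have hq0 : 0 < q := Real.exp_pos _
  have hq1 : q < 1 := by rw [hqdef, Real.exp_lt_one_iff]; nlinarith
  have h1q : 0 < 1 - q := by linarith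
  have hC0 : (0:ℝ) ≤ (n:ℝ)*q/(1-q)^n := div_nonneg (by positivity) (pow_nonneg h1q.le n)
  set G : (Fin n → ℝ) → ℝ≥0∞ := fun x => ENNReal.ofReal (g x ^ 2) with hGdef
  have hGm : Measurable G := (hc.pow 2).measurable.ennreal_ofReal
  have hDcont : Continuous (fun x : Fin n → ℝ =>
      (2 * Real.pi) ^ (-(n : ℝ) / 2) * Real.exp (-(∑ j, (x j) ^ 2) / 2)) := by
    apply continuous_const.mul
    apply Real.continuous_exp.comp
    apply Continuous.div_const
    exact (continuous_finset_sum _ fun j _ => (continuous_apply j).pow 2).neg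
  have hDm : Measurable (densE n) := hDcont.measurable.ennreal_ofReal
  have hrm : ∀ y : Fin n → ℤ, Measurable (fun u => rr n N y u) := by
    intro y
    apply Measurable.ennreal_ofReal
    apply Continuous.measurable
    apply Real.continuous_exp.comp
    apply Continuous.neg
    exact continuous_finset_sum _ fun j _ =>
      continuous_const.add (continuous_const.mul (continuous_apply j))
  set S : Set (Fin n → ℝ) := Set.univ.pi (fun _ : Fin n => Icc (-s) s) with hSdef
  have hSm : MeasurableSet S := MeasurableSet.univ_pi fun _ => measurableSet_Icc
  have hBm := measurableSet_Bs n N s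
  set W : Set (Fin n → ℝ) := ⋃ y : Fin n → ℤ, Bs n N s y with hWdef
  have hWm : MeasurableSet W := MeasurableSet.iUnion hBm
  rw [gaussR_eq, lintegral_withDensity_eq_lintegral_mul volume hDm hGm,
    restrict_withDensity hSm, lintegral_withDensity_eq_lintegral_mul _ hDm hGm]
  simp only [Pi.mul_apply]
  set h : (Fin n → ℝ) → ℝ≥0∞ := fun x => densE n x * G x with hhdef
  -- pointwise claim off the null set
  have hptwise : ∀ x, x ∉ Zset n N s → x ∉ W → g x = 0 := by
    intro x hxZ hxW
    obtain ⟨y, hy⟩ := exists_reduce n N hN x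
    set u : Fin n → ℝ := fun j => x j - 2*N*((y j):ℝ) with hudef
    have hxu : x = u + tv n N y := by
      funext j
      show x j = u j + 2*N*((y j):ℝ)
      rw [hudef]; ring
    by_cases hcase : ∀ j, |u j| < s
    · exfalso
      apply hxW
      rw [hWdef]
      refine Set.mem_iUnion.mpr ⟨y, Set.mem_univ_pi.mpr fun j => ?_⟩
      have h1 := abs_lt.mp (hcase j)
      rw [Set.mem_Ioo]
      constructor
      · have : u j = x j - 2*N*((y j):ℝ) := rfl
        rw [this] at h1; linarith [h1.1]
      · have : u j = x j - 2*N*((y j):ℝ) := rfl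
        rw [this] at h1; linarith [h1.2]
    · push_neg at hcase
      obtain ⟨j0, hj0⟩ := hcase
      have hnZ : ∀ (jj : Fin n) (mz : ℤ) (c : ℝ),
          (c = N ∨ c = s ∨ c = -s) → x jj ≠ 2*N*(mz:ℝ) + c := by
        intro jj mz c hc hxe
        apply hxZ
        refine Set.mem_iUnion.mpr ⟨jj, Set.mem_iUnion.mpr ⟨mz, ?_⟩⟩
        rcases hc with hc | hc | hc
        · exact Or.inl (Or.inl (show x jj = 2*N*(mz:ℝ) + N by rw [hxe, hc]))
        · exact Or.inl (Or.inr (show x jj = 2*N*(mz:ℝ) + s by rw [hxe, hc]))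
        · exact Or.inr (show x jj = 2*N*(mz:ℝ) - s by rw [hxe, hc]; ring)
      have huN : ∀ j, |u j| < N := by
        intro j
        have h1 := (hy j).1
        have h2 := (hy j).2
        have : u j = x j - 2*N*((y j):ℝ) := rfl
        rw [abs_lt, this]
        refine ⟨?_, by linarith⟩
        rcases lt_or_eq_of_le h1 with h | h
        · have : u j = x j - 2*N*((y j):ℝ) := rfl
          linarith
        · exfalso
          apply hnZ j (y j - 1) N (Or.inl rfl)
          push_cast
          linarith
      have hj0' : s < |u j0| := by
        rcases lt_or_eq_of_le hj0 with h | h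
        · exact h
        · exfalso
          have habs : u j0 = s ∨ u j0 = -s := by
            rcases abs_eq hs0 |>.mp h.symm with h' | h'
            · exact Or.inl h'
            · exact Or.inr h'
          have hu0 : u j0 = x j0 - 2*N*((y j0):ℝ) := rfl
          rcases habs with h' | h'
          · exact hnZ j0 (y j0) s (Or.inr (Or.inl rfl)) (by rw [hu0] at h'; linarith)
          · exact hnZ j0 (y j0) (-s) (Or.inr (Or.inr rfl)) (by rw [hu0] at h'; linarith)
      have hgu : g x = g u := by rw [hxu]; exact hper u y
      rw [hgu]
      refine hvan u ⟨huN, ?_⟩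
      push_neg
      exact ⟨j0, hj0'⟩
  have hae : ∀ᵐ x ∂(volume : Measure (Fin n → ℝ)), x ∈ Wᶜ → h x = 0 := by
    have hz : ∀ᵐ x ∂(volume : Measure (Fin n → ℝ)), x ∉ Zset n N s := by
      rw [ae_iff]
      simpa using volume_Zset n N s
    filter_upwards [hz] with x hx hxW
    have := hptwise x hx hxW
    simp [hhdef, hGdef, this]
  have hsplit1 : ∫⁻ x, h x ∂volume = ∫⁻ x in W, h x ∂volume := by
    rw [← lintegral_add_compl h hWm]
    have hzero : ∫⁻ x in Wᶜ, h x ∂volume = 0 := by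
      rw [setLIntegral_congr_fun_ae hWm.compl hae, lintegral_zero]
    rw [hzero, add_zero]
  have hsplit2 : ∫⁻ x in W, h x ∂volume = ∑' y : Fin n → ℤ, ∫⁻ x in Bs n N s y, h x ∂volume :=
    lintegral_iUnion hBm (Bs_disjoint n N s hN hs2) h
  set T : (Fin n → ℤ) → ℝ≥0∞ :=
    fun y => ∫⁻ u in Bs n N s 0, (densE n u * rr n N y u) * G u ∂volume with hTdef
  have htrans : ∀ y : Fin n → ℤ, ∫⁻ x in Bs n N s y, h x ∂volume = T y := by
    intro y
    have hmem : ∀ u : Fin n → ℝ, u + tv n N y ∈ Bs n N s y ↔ u ∈ Bs n N s 0 := by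
      intro u
      simp only [Bs, Set.mem_univ_pi, Set.mem_Ioo]
      refine forall_congr' fun j => ?_
      have happ : (u + tv n N y) j = u j + 2*N*((y j):ℝ) := rfl
      have h0 : ((0 : Fin n → ℤ) j : ℝ) = 0 := by norm_num
      rw [happ, h0]
      constructor
      · rintro ⟨ha, hb⟩; constructor <;> linarith
      · rintro ⟨ha, hb⟩; constructor <;> linarith
    rw [setLIntegral_translate n h (tv n N y) (hBm y) (hBm 0) hmem, hTdef]
    refine setLIntegral_congr_fun (hBm 0) (fun u _ => ?_)
    show densE n (u + tv n N y) * G (u + tv n N y) = (densE n u * rr n N y u) * G u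
    rw [densE_shift n N y u]
    have hg : G (u + tv n N y) = G u := by
      rw [hGdef]
      show ENNReal.ofReal (g (u + tv n N y) ^ 2) = ENNReal.ofReal (g u ^ 2)
      rw [hper u y]
    rw [hg]
  set J : ℝ≥0∞ := ∫⁻ u in Bs n N s 0, h u ∂volume with hJdef
  have hJ0 : T 0 = J := by
    rw [hTdef, hJdef]
    refine setLIntegral_congr_fun (hBm 0) (fun u _ => ?_)
    have : rr n N 0 u = 1 := by
      rw [rr]; norm_num
    rw [this, mul_one]
  have hitm : ∀ y : Fin n → ℤ, Measurable (fun u => (if y = 0 then 0 else rr n N y u)) := by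
    intro y
    by_cases hy : y = 0
    · simp only [hy, if_true]
      exact measurable_const
    · simp only [hy, if_false]
      exact hrm y
  have hTle : ∑' y : Fin n → ℤ, (if y = 0 then 0 else T y) ≤
      ENNReal.ofReal ((n:ℝ)*q/(1-q)^n) * J := by
    have h1 : ∀ y : Fin n → ℤ, (if y = 0 then (0:ℝ≥0∞) else T y)
        = ∫⁻ u in Bs n N s 0, (densE n u * G u) * (if y = 0 then 0 else rr n N y u) ∂volume := by
      intro y
      by_cases hy : y = 0
      · simp [hy]
      · simp only [hy, if_false, hTdef]
        refine setLIntegral_congr_fun (hBm 0) (fun u _ => ?_)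
        ring
    have hub : ∀ u ∈ Bs n N s 0, ∀ j, |u j| ≤ N/2 := by
      intro u hu j
      have hmem := Set.mem_univ_pi.mp hu j
      rw [Set.mem_Ioo] at hmem
      have h00 : ((0 : Fin n → ℤ) j : ℝ) = 0 := by norm_num
      rw [h00] at hmem
      have hsle : s ≤ N/2 := hs2 (Nat.pos_iff_ne_zero.mp j.pos)
      rw [abs_le]
      constructor <;> [linarith [hmem.1]; linarith [hmem.2]]
    calc ∑' y : Fin n → ℤ, (if y = 0 then (0:ℝ≥0∞) else T y)
        = ∑' y : Fin n → ℤ, ∫⁻ u in Bs n N s 0,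
            (densE n u * G u) * (if y = 0 then 0 else rr n N y u) ∂volume := tsum_congr h1
      _ = ∫⁻ u in Bs n N s 0,
            ∑' y : Fin n → ℤ, (densE n u * G u) * (if y = 0 then 0 else rr n N y u) ∂volume :=
          (lintegral_tsum fun y => ((hDm.mul hGm).mul (hitm y)).aemeasurable).symm
      _ = ∫⁻ u in Bs n N s 0,
            (densE n u * G u) * ∑' y : Fin n → ℤ, (if y = 0 then 0 else rr n N y u) ∂volume :=
          lintegral_congr fun u => ENNReal.tsum_mul_left
      _ ≤ ∫⁻ u in Bs n N s 0, (densE n u * G u) * ENNReal.ofReal ((n:ℝ)*q/(1-q)^n) ∂volume := by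
          refine setLIntegral_mono' (hBm 0) fun u hu => ?_
          exact mul_le_mul_right (tsum_rr_ne_le n N hN u (hub u hu)) _
      _ = ENNReal.ofReal ((n:ℝ)*q/(1-q)^n) * J := by
          rw [hJdef, ← lintegral_const_mul' _ _ ENNReal.ofReal_ne_top]
          exact lintegral_congr fun u => by rw [hhdef]; ring
  have hBS : Bs n N s 0 ⊆ S := by
    intro x hx
    refine Set.mem_univ_pi.mpr fun j => ?_
    have hmem := Set.mem_univ_pi.mp hx j
    rw [Set.mem_Ioo] at hmem
    have h00 : ((0 : Fin n → ℤ) j : ℝ) = 0 := by norm_num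
    rw [h00] at hmem
    exact ⟨by linarith [hmem.1], by linarith [hmem.2]⟩
  calc ∫⁻ x, h x ∂volume = ∑' y : Fin n → ℤ, T y := by
        rw [hsplit1, hsplit2]; exact tsum_congr htrans
    _ = T 0 + ∑' y : Fin n → ℤ, (if y = 0 then 0 else T y) := tsum_eq_add_tsum_ite' T 0
    _ = J + ∑' y : Fin n → ℤ, (if y = 0 then 0 else T y) := by rw [hJ0]
    _ ≤ J + ENNReal.ofReal ((n:ℝ)*q/(1-q)^n) * J := add_le_add_right hTle J
    _ = (1 + ENNReal.ofReal ((n:ℝ)*q/(1-q)^n)) * J := by rw [add_mul, one_mul]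
    _ = ENNReal.ofReal ((n:ℝ)*q/(1-q)^n + 1) * J := by
        rw [ENNReal.ofReal_add hC0 zero_le_one, ENNReal.ofReal_one, add_comm]
    _ ≤ ENNReal.ofReal ((n:ℝ)*q/(1-q)^n + 1) * ∫⁻ x in S, h x ∂volume :=
        mul_le_mul_right (lintegral_mono_set hBS) _


end PGS

end PGS


open MeasureTheory PGS in
theorem periodic_in_gauss_sobolev (n : ℕ) (N : ℝ) (hN : 0 < N)
    (f : (Fin n → ℝ) → ℝ) (hf : ContDiff ℝ (⊤ : ℕ∞) f)
    (hper : ∀ (x : Fin n → ℝ) (y : Fin n → ℤ),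
      f (fun j => x j + 2 * N * (y j : ℝ)) = f x)
    (hvan : ∀ x : Fin n → ℝ, (∀ j, |x j| ≤ N) →
      ¬ (∀ j, |x j| ≤ N / (2 * Real.sqrt n)) → f x = 0) :
    ∀ α : Fin n → ℕ,
      Integrable (fun x => (pdRMulti n α f x) ^ 2) (gaussR n) ∧
      ∫ x, (pdRMulti n α f x) ^ 2 ∂gaussR n ≤
        (n * Real.exp (-N ^ 2) / (1 - Real.exp (-N ^ 2)) ^ n + 1) *
          ∫ x in Set.univ.pi
              (fun _ : Fin n => Set.Icc (-(N / (2 * Real.sqrt n))) (N / (2 * Real.sqrt n))),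
            (pdRMulti n α f x) ^ 2 ∂gaussR n := by
  intro α
  set s : ℝ := N / (2 * Real.sqrt n) with hsdef
  have hs0 : 0 ≤ s := div_nonneg hN.le (by positivity)
  have hs2 : n ≠ 0 → s ≤ N / 2 := by
    intro hn
    have hsq : 0 < Real.sqrt n := Real.sqrt_pos.mpr (by exact_mod_cast Nat.pos_of_ne_zero hn)
    have h1sqrt : (1:ℝ) ≤ Real.sqrt n := by
      rw [show (1:ℝ) = Real.sqrt 1 by simp]
      exact Real.sqrt_le_sqrt (by exact_mod_cast Nat.one_le_iff_ne_zero.mpr hn)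
    rw [hsdef, div_le_div_iff₀ (by linarith) (by norm_num)]
    nlinarith
  -- the bundled properties of f and its derivatives
  have hPf : Pprop n N s f := by
    refine ⟨hf, fun x y => hper x y, fun x hx => hvan x (fun j => (hx.1 j).le) hx.2⟩
  have hP : Pprop n N s (pdRMulti n α f) := pdRMulti_prop n N s α hPf
  obtain ⟨hsm, hperg, hvang⟩ := hP
  set g : (Fin n → ℝ) → ℝ := pdRMulti n α f with hgdef
  have hc : Continuous g := hsm.continuous
  set q : ℝ := Real.exp (-N^2) with hqdef
  have hq0 : 0 < q := Real.exp_pos _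
  have hq1 : q < 1 := by rw [hqdef, Real.exp_lt_one_iff]; nlinarith
  have h1q : 0 < 1 - q := by linarith
  have hC0 : (0:ℝ) ≤ (n:ℝ)*q/(1-q)^n := div_nonneg (by positivity) (pow_nonneg h1q.le n)
  set S : Set (Fin n → ℝ) := Set.univ.pi (fun _ : Fin n => Set.Icc (-s) s) with hSdef
  have hSm : MeasurableSet S := MeasurableSet.univ_pi fun _ => measurableSet_Icc
  set G : (Fin n → ℝ) → ℝ≥0∞ := fun x => ENNReal.ofReal (g x ^ 2) with hGdef
  have hmain : ∫⁻ x, G x ∂(gaussR n) ≤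
      ENNReal.ofReal ((n:ℝ)*q/(1-q)^n + 1) * ∫⁻ x in S, G x ∂(gaussR n) :=
    main_lintegral n N s hN hs0 hs2 hc hperg hvang
  -- finiteness of the right-hand side
  obtain ⟨M, hM0, hM⟩ := bounded_of_periodic n N hN hc hperg
  have hGle : ∀ x, G x ≤ ENNReal.ofReal (M^2) := by
    intro x
    apply ENNReal.ofReal_le_ofReal
    have h := abs_le.mp (hM x)
    nlinarith [h.1, h.2]
  have hμS : gaussR n S < ⊤ := by
    have h1 : gaussR n S = ∫⁻ x in S, densE n x ∂volume := by
      rw [gaussR_eq, withDensity_apply _ hSm]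
    have hcn : (0:ℝ) ≤ (2 * Real.pi) ^ (-(n : ℝ) / 2) :=
      Real.rpow_nonneg (by positivity) _
    have h2 : ∀ x, densE n x ≤ ENNReal.ofReal ((2 * Real.pi) ^ (-(n : ℝ) / 2)) := by
      intro x
      apply ENNReal.ofReal_le_ofReal
      have hexp : Real.exp (-(∑ j, (x j) ^ 2) / 2) ≤ 1 := by
        apply Real.exp_le_one_iff.mpr
        have : (0:ℝ) ≤ ∑ j, (x j)^2 := Finset.sum_nonneg fun j _ => sq_nonneg _
        linarith
      nlinarith
    have h3 : volume S < ⊤ := by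
      rw [hSdef, volume_pi_pi]
      exact ENNReal.prod_lt_top fun j _ => by
        rw [Real.volume_Icc]; exact ENNReal.ofReal_lt_top
    calc gaussR n S = ∫⁻ x in S, densE n x ∂volume := h1
      _ ≤ ∫⁻ _ in S, ENNReal.ofReal ((2 * Real.pi) ^ (-(n : ℝ) / 2)) ∂volume :=
          setLIntegral_mono' hSm fun x _ => h2 x
      _ = ENNReal.ofReal ((2 * Real.pi) ^ (-(n : ℝ) / 2)) * volume S := by
          rw [setLIntegral_const]
      _ < ⊤ := ENNReal.mul_lt_top ENNReal.ofReal_lt_top h3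
  have hB : ∫⁻ x in S, G x ∂(gaussR n) < ⊤ := by
    calc ∫⁻ x in S, G x ∂(gaussR n) ≤ ∫⁻ _ in S, ENNReal.ofReal (M^2) ∂(gaussR n) :=
          setLIntegral_mono' hSm fun x _ => hGle x
      _ = ENNReal.ofReal (M^2) * gaussR n S := by rw [setLIntegral_const]
      _ < ⊤ := ENNReal.mul_lt_top ENNReal.ofReal_lt_top hμS
  have hA : ∫⁻ x, G x ∂(gaussR n) < ⊤ :=
    lt_of_le_of_lt hmain (ENNReal.mul_lt_top ENNReal.ofReal_lt_top hB)
  have hmeas : AEStronglyMeasurable (fun x => g x ^ 2) (gaussR n) :=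
    (hc.pow 2).aestronglyMeasurable
  have hint : Integrable (fun x => g x ^ 2) (gaussR n) := by
    refine ⟨hmeas, ?_⟩
    rw [hasFiniteIntegral_iff_ofReal (ae_of_all _ fun x => sq_nonneg _)]
    exact hA
  refine ⟨hint, ?_⟩
  have hLHS : ∫ x, g x ^ 2 ∂gaussR n = (∫⁻ x, G x ∂gaussR n).toReal :=
    integral_eq_lintegral_of_nonneg_ae (ae_of_all _ fun x => sq_nonneg _) hmeas
  have hRHS : ∫ x in S, g x ^ 2 ∂gaussR n = (∫⁻ x in S, G x ∂gaussR n).toReal :=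
    integral_eq_lintegral_of_nonneg_ae (ae_of_all _ fun x => sq_nonneg _)
      hmeas.restrict
  have hC1 : (0:ℝ) ≤ (n:ℝ)*q/(1-q)^n + 1 := by linarith
  calc ∫ x, g x ^ 2 ∂gaussR n = (∫⁻ x, G x ∂gaussR n).toReal := hLHS
    _ ≤ (ENNReal.ofReal ((n:ℝ)*q/(1-q)^n + 1) * ∫⁻ x in S, G x ∂gaussR n).toReal :=
        ENNReal.toReal_mono (ENNReal.mul_ne_top ENNReal.ofReal_ne_top hB.ne) hmain
    _ = ((n:ℝ)*q/(1-q)^n + 1) * (∫⁻ x in S, G x ∂gaussR n).toReal := by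
        rw [ENNReal.toReal_mul, ENNReal.toReal_ofReal hC1]
    _ = ((n:ℝ)*q/(1-q)^n + 1) * ∫ x in S, g x ^ 2 ∂gaussR n := by rw [hRHS]
end
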